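/- arXiv:1801.00951 — 12 statements merged into one kernel-verified Lean document; each statement's English description precedes it below -/
import Mathlib

section
/- Let F be a field of characteristic p > 0 and let G be a finite p-group whose nilpotency class is at most 2. Then the group algebra F[G] is a centrally essential ring. -/
/-!
For a central `z` of `p`-power order, `δ_z = z - 1` is a central nilpotent element of `F[G]`,
since `(z - 1) ^ p ^ n = z ^ p ^ n - 1 = 0` in characteristic `p`. Given `r ≠ 0`, multiplying
by suitable powers of the finitely many `δ_z` yields a central `c` with `c * r ≠ 0` and
`z * (c * r) = c * r` for every central `z`. In class at most two all commutators are central,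
and an element of `F[G]` invariant under left translation by commutators is central.
-/

/-- A ring `R` is *centrally essential* if for every nonzero `r ∈ R` there is a central
element `c` such that `c * r` is a nonzero central element. -/
def IsCentrallyEssential (R : Type*) [Ring R] : Prop :=
  ∀ r : R, r ≠ 0 → ∃ c ∈ Subring.center R, c * r ≠ 0 ∧ c * r ∈ Subring.center R

open scoped commutatorElement

theorem Subgroup.commutatorElement_mem_center_of_upperCentralSeries_two_eq_top {G : Type*}
    [Group G] (h2 : upperCentralSeries G 2 = ⊤) (x y : G) : ⁅x, y⁆ ∈ center G := by
  rw [← upperCentralSeries_one]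
  exact mem_upperCentralSeries_succ_iff.mp (h2 ▸ mem_top x) y

section MonoidWithZero

variable {M : Type*} [MonoidWithZero M]

theorem IsNilpotent.exists_pow_mul_ne_zero_and_mul_pow_mul_eq_zero {δ y : M}
    (hδ : IsNilpotent δ) (hy : y ≠ 0) : ∃ m, δ ^ m * y ≠ 0 ∧ δ * (δ ^ m * y) = 0 := by
  classical
  have hex : ∃ n, δ ^ n * y = 0 := hδ.imp fun n hn ↦ by rw [hn, zero_mul]
  obtain ⟨m, hm⟩ : ∃ m, Nat.find hex = m + 1 :=
    Nat.exists_eq_succ_of_ne_zero fun h ↦ hy <| by simpa [h] using Nat.find_spec hex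
  refine ⟨m, Nat.find_min hex (by omega), ?_⟩
  rw [← mul_assoc, ← pow_succ', ← hm]
  exact Nat.find_spec hex

theorem exists_mem_center_mul_ne_zero_and_forall_mul_eq_zero {ι : Type*} (s : Finset ι)
    (δ : ι → M) (hcenter : ∀ i ∈ s, δ i ∈ Set.center M)
    (hnil : ∀ i ∈ s, IsNilpotent (δ i)) {w : M} (hw : w ≠ 0) :
    ∃ c ∈ Set.center M, c * w ≠ 0 ∧ ∀ i ∈ s, δ i * (c * w) = 0 := by
  classical
  induction s using Finset.induction_on with
  | empty => exact ⟨1, Set.one_mem_center, by rwa [one_mul], by simp⟩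
  | insert j s hj ih =>
    obtain ⟨c, hc, hcw, hkill⟩ := ih (fun i hi ↦ hcenter i (Finset.mem_insert_of_mem hi))
      (fun i hi ↦ hnil i (Finset.mem_insert_of_mem hi))
    obtain ⟨m, hne, hzero⟩ :=
      (hnil j (Finset.mem_insert_self j s)).exists_pow_mul_ne_zero_and_mul_pow_mul_eq_zero hcw
    have hpow : δ j ^ m ∈ Set.center M :=
      (Submonoid.center M).pow_mem (hcenter j (Finset.mem_insert_self j s)) m
    refine ⟨δ j ^ m * c, Set.mul_mem_center hpow hc, by rwa [mul_assoc], ?_⟩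
    intro i hi
    rw [mul_assoc]
    rcases Finset.mem_insert.mp hi with rfl | hi
    · exact hzero
    · rw [← mul_assoc, Semigroup.mem_center_iff.mp hpow (δ i), mul_assoc, hkill i hi, mul_zero]

end MonoidWithZero

namespace MonoidAlgebra

theorem single_one_mem_center {k G : Type*} [Semiring k] [Group G] {z : G}
    (hz : z ∈ Subgroup.center G) : single z (1 : k) ∈ Set.center (MonoidAlgebra k G) := by
  refine Semigroup.mem_center_iff.mpr fun b ↦ ?_
  ext x
  rw [coeff_mul_single_apply, coeff_single_mul_apply, one_mul, mul_one,
    Subgroup.mem_center_iff.mp (Subgroup.inv_mem _ hz) x]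

theorem isNilpotent_single_one_sub_one {k G : Type*} [CommRing k] [Monoid G] (p : ℕ)
    [Fact p.Prime] [CharP k p] {z : G} {n : ℕ} (hz : z ^ p ^ n = 1) :
    IsNilpotent (single z (1 : k) - 1) := by
  have : CharP (MonoidAlgebra k G) p := charP_of_injective_algebraMap' k p
  refine ⟨p ^ n, ?_⟩
  rw [sub_pow_char_pow_of_commute _ _ (Commute.one_right _), one_pow, single_pow, hz, one_pow,
    one_def, sub_self]

/-- In `k[G]`, `single g a * w` and `w * single g a` have coefficients `w (g⁻¹ * x)` and
`w (x * g⁻¹)` at `x`; these two group elements differ by the commutator `⁅x, g⁻¹⁆`. -/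
theorem mem_center_of_forall_single_commutatorElement_mul_eq {k G : Type*} [CommSemiring k]
    [Group G] {w : MonoidAlgebra k G} (hw : ∀ x y : G, single ⁅x, y⁆ (1 : k) * w = w) :
    w ∈ Set.center (MonoidAlgebra k G) := by
  refine Semigroup.mem_center_iff.mpr fun b ↦ ?_
  induction b using MonoidAlgebra.induction_linear with
  | zero => rw [zero_mul, mul_zero]
  | add f g hf hg => rw [add_mul, mul_add, hf, hg]
  | single g a =>
    ext x
    rw [coeff_mul_single_apply, coeff_single_mul_apply, mul_comm]
    conv_rhs => rw [← hw x g⁻¹, coeff_single_mul_apply, one_mul]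
    congr 2
    rw [commutatorElement_def]
    group

end MonoidAlgebra

theorem centrally_essential_of_nilpotency_class_le_two
    (F : Type*) [Field F] (p : ℕ) [Fact p.Prime] [CharP F p]
    (G : Type*) [Group G] [Fintype G] (hG : IsPGroup p G)
    (h2 : upperCentralSeries G 2 = ⊤) :
    IsCentrallyEssential (MonoidAlgebra F G) := by
  classical
  intro r hr
  obtain ⟨c, hc, hcr, hkill⟩ := exists_mem_center_mul_ne_zero_and_forall_mul_eq_zero
    (Finset.univ : Finset (Subgroup.center G)) (fun z ↦ MonoidAlgebra.single (z : G) (1 : F) - 1)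
    (fun z _ ↦ (Subring.center _).sub_mem (MonoidAlgebra.single_one_mem_center z.2)
      (Subring.center _).one_mem)
    (fun z _ ↦ (hG z).elim fun _ hz ↦ MonoidAlgebra.isNilpotent_single_one_sub_one p hz) hr
  refine ⟨c, hc, hcr,
    MonoidAlgebra.mem_center_of_forall_single_commutatorElement_mul_eq fun x y ↦ ?_⟩
  have hkill_comm := hkill
    ⟨⁅x, y⁆, Subgroup.commutatorElement_mem_center_of_upperCentralSeries_two_eq_top h2 x y⟩
    (Finset.mem_univ _)
  rwa [sub_mul, one_mul, sub_eq_zero] at hkill_comm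
end

section
/- For every prime p and every field F of characteristic p, there exists a finite group G of order p^5 such that the group algebra F[G] is not a centrally essential ring. -/
theorem isConj_of_mul_eq {G : Type*} [Group G] {x y : G} (w : G) (h : w * x = y * w) :
    IsConj x y :=
  ⟨toUnits w, h⟩

namespace MonoidAlgebra

lemma coeff_eq_of_isConj {R G : Type*} [Ring R] [Group G] {c : MonoidAlgebra R G}
    (hc : c ∈ Subring.center (MonoidAlgebra R G)) {u v : G}
    (huv : IsConj u v) : c.coeff u = c.coeff v := by
  obtain ⟨g, rfl⟩ := isConj_iff.1 huv
  have h := congrArg (fun x : MonoidAlgebra R G => x.coeff (g * u))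
    (Subring.mem_center_iff.1 hc (single g 1))
  simpa using h

section SubgroupSum

variable {R G : Type*} [Semiring R] [Group G] (H : Subgroup G) [Fintype H]

noncomputable def subgroupSum : MonoidAlgebra R G := ∑ h : H, single (h : G) 1

variable {H}

lemma coeff_subgroupSum_of_mem {x : G} (hx : x ∈ H) :
    (subgroupSum H : MonoidAlgebra R G).coeff x = 1 := by
  rw [subgroupSum, coeff_sum, Finset.sum_apply', Fintype.sum_eq_single ⟨x, hx⟩]
  · simp
  · intro h hh
    rw [coeff_single, Finsupp.single_eq_of_ne]
    exact fun e => hh (Subtype.ext e.symm)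

lemma coeff_subgroupSum_of_notMem {x : G} (hx : x ∉ H) :
    (subgroupSum H : MonoidAlgebra R G).coeff x = 0 := by
  rw [subgroupSum, coeff_sum, Finset.sum_apply']
  refine Finset.sum_eq_zero fun h _ => ?_
  rw [coeff_single, Finsupp.single_eq_of_ne]
  exact fun e => hx (e ▸ h.2)

lemma coeff_mul_subgroupSum (c : MonoidAlgebra R G) (x : G) :
    (c * subgroupSum H).coeff x = ∑ h : H, c.coeff (x * (h : G)⁻¹) := by
  simp [subgroupSum, Finset.mul_sum]

end SubgroupSum

section NotCentrallyEssential

variable {F G : Type*} [Field F] [Group G] {H : Subgroup G} [Fintype H]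

lemma mul_subgroupSum_of_mem_center (hcard : (Fintype.card H : F) = 0)
    (hconj : ∀ u ∉ H, ∀ h ∈ H, IsConj u (u * h)) {c : MonoidAlgebra F G}
    (hc : c ∈ Subring.center (MonoidAlgebra F G)) :
    c * subgroupSum H = (∑ h : H, c.coeff h) • subgroupSum H := by
  ext x
  rw [coeff_mul_subgroupSum, coeff_smul_apply, smul_eq_mul]
  by_cases hx : x ∈ H
  · rw [coeff_subgroupSum_of_mem hx, mul_one]
    simpa [div_eq_mul_inv] using (Equiv.divLeft (⟨x, hx⟩ : H)).sum_comp fun h => c.coeff h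
  · have hconst (h : H) : c.coeff (x * (h : G)⁻¹) = c.coeff x :=
      (coeff_eq_of_isConj hc (hconj x hx _ (inv_mem h.2))).symm
    simp [coeff_subgroupSum_of_notMem hx, hconst, hcard]

theorem not_isCentrallyEssential_of_isConj_mul_mem (hcard : (Fintype.card H : F) = 0)
    (hconj : ∀ u ∉ H, ∀ h ∈ H, IsConj u (u * h)) {g y : G} (hgy : IsConj g y)
    (hy : y * g⁻¹ ∉ H) : ¬ IsCentrallyEssential (MonoidAlgebra F G) := by
  set r : MonoidAlgebra F G := subgroupSum H * single g 1
  have hr (x : G) : r.coeff x = (subgroupSum H : MonoidAlgebra F G).coeff (x * g⁻¹) := by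
    simp [r]
  have hrg : r.coeff g = 1 := by rw [hr, mul_inv_cancel, coeff_subgroupSum_of_mem H.one_mem]
  have hry : r.coeff y = 0 := by rw [hr, coeff_subgroupSum_of_notMem hy]
  intro hCE
  obtain ⟨c, hc, hcr, hcr_center⟩ := hCE r fun h => by simp [h] at hrg
  set ε := ∑ h : H, c.coeff h
  have hcr_eq : c * r = ε • r := by
    rw [← mul_assoc, mul_subgroupSum_of_mem_center hcard hconj hc, smul_mul_assoc]
  have hε : ε ≠ 0 := fun h => hcr (by rw [hcr_eq, h, zero_smul])
  have hr_center : r ∈ Subring.center (MonoidAlgebra F G) := by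
    have := Set.smul_mem_center ε⁻¹ (a := c * r) hcr_center
    rwa [hcr_eq, smul_smul, inv_mul_cancel₀ hε, one_smul] at this
  exact one_ne_zero (hrg ▸ hry ▸ coeff_eq_of_isConj hr_center hgy)

end NotCentrallyEssential

end MonoidAlgebra

/-- Upper unitriangular `4 × 4` matrices over `ZMod p` of the form
`[[1, a, b, c], [0, 1, d, e], [0, 0, 1, d], [0, 0, 0, 1]]`, with matrix multiplication. -/
@[ext]
structure CounterexampleGroup (p : ℕ) : Type where
  a : ZMod p
  b : ZMod p
  c : ZMod p
  d : ZMod p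
  e : ZMod p

namespace CounterexampleGroup

variable {p : ℕ}

instance : One (CounterexampleGroup p) := ⟨⟨0, 0, 0, 0, 0⟩⟩

instance : Mul (CounterexampleGroup p) :=
  ⟨fun x y => ⟨x.a + y.a, x.b + y.b + x.a * y.d,
    x.c + y.c + x.a * y.e + x.b * y.d, x.d + y.d, x.e + y.e + x.d * y.d⟩⟩

instance : Inv (CounterexampleGroup p) :=
  ⟨fun x => ⟨-x.a, -x.b + x.a * x.d,
    -x.c + x.a * x.e - x.a * x.d * x.d + x.b * x.d, -x.d, -x.e + x.d * x.d⟩⟩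

@[simp] lemma one_a : (1 : CounterexampleGroup p).a = 0 := rfl
@[simp] lemma one_b : (1 : CounterexampleGroup p).b = 0 := rfl
@[simp] lemma one_c : (1 : CounterexampleGroup p).c = 0 := rfl
@[simp] lemma one_d : (1 : CounterexampleGroup p).d = 0 := rfl
@[simp] lemma one_e : (1 : CounterexampleGroup p).e = 0 := rfl

@[simp] lemma mul_a (x y : CounterexampleGroup p) : (x * y).a = x.a + y.a := rfl
@[simp] lemma mul_b (x y : CounterexampleGroup p) : (x * y).b = x.b + y.b + x.a * y.d := rfl
@[simp] lemma mul_c (x y : CounterexampleGroup p) :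
    (x * y).c = x.c + y.c + x.a * y.e + x.b * y.d := rfl
@[simp] lemma mul_d (x y : CounterexampleGroup p) : (x * y).d = x.d + y.d := rfl
@[simp] lemma mul_e (x y : CounterexampleGroup p) : (x * y).e = x.e + y.e + x.d * y.d := rfl

@[simp] lemma inv_a (x : CounterexampleGroup p) : x⁻¹.a = -x.a := rfl
@[simp] lemma inv_b (x : CounterexampleGroup p) : x⁻¹.b = -x.b + x.a * x.d := rfl
@[simp] lemma inv_c (x : CounterexampleGroup p) :
    x⁻¹.c = -x.c + x.a * x.e - x.a * x.d * x.d + x.b * x.d := rfl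
@[simp] lemma inv_d (x : CounterexampleGroup p) : x⁻¹.d = -x.d := rfl
@[simp] lemma inv_e (x : CounterexampleGroup p) : x⁻¹.e = -x.e + x.d * x.d := rfl

instance : Group (CounterexampleGroup p) where
  mul_assoc x y z := by ext <;> simp <;> ring
  one_mul x := by ext <;> simp
  mul_one x := by ext <;> simp
  inv_mul_cancel x := by ext <;> simp; ring

def equivProd (p : ℕ) :
    CounterexampleGroup p ≃ ZMod p × ZMod p × ZMod p × ZMod p × ZMod p where
  toFun x := (x.a, x.b, x.c, x.d, x.e)
  invFun t := ⟨t.1, t.2.1, t.2.2.1, t.2.2.2.1, t.2.2.2.2⟩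

noncomputable instance [NeZero p] : Fintype (CounterexampleGroup p) :=
  Fintype.ofEquiv _ (equivProd p).symm

lemma card_eq [NeZero p] : Fintype.card (CounterexampleGroup p) = p ^ 5 := by
  simp [Fintype.card_congr (equivProd p), ZMod.card]
  ring

def centralHom (p : ℕ) : Multiplicative (ZMod p) →* CounterexampleGroup p where
  toFun k := ⟨0, 0, k.toAdd, 0, 0⟩
  map_one' := rfl
  map_mul' _ _ := by ext <;> simp

lemma centralHom_injective : Function.Injective (centralHom p) :=
  fun _ _ h => congrArg CounterexampleGroup.c h

lemma mem_range_centralHom {x : CounterexampleGroup p} :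
    x ∈ (centralHom p).range ↔ x.a = 0 ∧ x.b = 0 ∧ x.d = 0 ∧ x.e = 0 := by
  constructor
  · rintro ⟨k, rfl⟩
    simp [centralHom]
  · rintro ⟨ha, hb, hd, he⟩
    exact ⟨.ofAdd x.c, by ext <;> simp [centralHom, *]⟩

variable [Fact p.Prime]

lemma isConj_mul_centralHom {u : CounterexampleGroup p} (hu : u ∉ (centralHom p).range)
    (k : ZMod p) : IsConj u (u * centralHom p (.ofAdd k)) := by
  rw [mem_range_centralHom] at hu
  by_cases ha : u.a = 0
  · by_cases hd : u.d = 0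
    · by_cases hb : u.b = 0
      · have he : u.e ≠ 0 := fun he => hu ⟨ha, hb, hd, he⟩
        refine isConj_of_mul_eq ⟨k / u.e, 0, 0, 0, 0⟩ ?_
        ext <;> simp [centralHom, ha, hb, hd, he]
      · refine isConj_of_mul_eq ⟨0, 0, 0, -k / u.b, 0⟩ ?_
        ext <;> simp [centralHom, ha, hd, hb, mul_div_cancel₀]
    · refine isConj_of_mul_eq ⟨0, k / u.d, 0, 0, 0⟩ ?_
      ext <;> simp [centralHom, ha, hd, add_comm]
  · refine isConj_of_mul_eq ⟨0, 0, 0, 0, -k / u.a⟩ ?_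
    ext <;> simp [centralHom, ha, mul_div_cancel₀, add_comm]

lemma exists_isConj_mul_inv_notMem_range :
    ∃ g y : CounterexampleGroup p, IsConj g y ∧ y * g⁻¹ ∉ (centralHom p).range := by
  refine ⟨⟨1, 0, 0, 0, 0⟩, ⟨1, -1, 1, 0, 0⟩,
    isConj_of_mul_eq ⟨0, 0, 0, 1, 0⟩ ?_, ?_⟩
  · ext <;> simp
  · rw [mem_range_centralHom]
    simp

end CounterexampleGroup

open CounterexampleGroup in
theorem exists_group_of_order_p_pow_five_not_centrally_essential
    (F : Type*) [Field F] (p : ℕ) [Fact p.Prime] [CharP F p] :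
    ∃ (G : Type) (_ : Group G) (_ : Fintype G),
      Fintype.card G = p ^ 5 ∧ ¬ IsCentrallyEssential (MonoidAlgebra F G) := by
  classical
  obtain ⟨g, y, hgy, hy⟩ := exists_isConj_mul_inv_notMem_range (p := p)
  refine ⟨CounterexampleGroup p, inferInstance, inferInstance, card_eq, ?_⟩
  refine MonoidAlgebra.not_isCentrallyEssential_of_isConj_mul_mem ?_ ?_ hgy hy
  · rw [Fintype.card_coeSort_range centralHom_injective, Fintype.card_multiplicative, ZMod.card,
      CharP.cast_eq_zero]
  · rintro u hu _ ⟨k, rfl⟩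
    exact isConj_mul_centralHom hu k.toAdd
end

section
/- Let A be a (unital, associative) ring and G a group. If the group ring A[G] is a centrally essential ring, then A is a centrally essential ring. -/
/-!
Embed `a ≠ 0` as `single 1 a` and let `c` be a central element of `A[G]` with
`c * single 1 a` nonzero and central. Since `A` sits in `A[G]` as `single 1 _`, every
coefficient of a central element of `A[G]` is central in `A`; and the coefficients of
`c * single 1 a` are `c g * a`. Any `g` where this product is nonzero gives the witness `c g`.
-/

namespace MonoidAlgebra

variable {A G : Type*}

theorem exists_coeff_ne_zero [Semiring A] {x : MonoidAlgebra A G} (hx : x ≠ 0) :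
    ∃ g, x.coeff g ≠ 0 :=
  DFunLike.ne_iff.mp (coeff_eq_zero.not.mpr hx)

theorem coeff_mem_center [Semiring A] [Monoid G] {x : MonoidAlgebra A G}
    (hx : x ∈ Set.center (MonoidAlgebra A G)) (g : G) : x.coeff g ∈ Set.center A := by
  rw [Semigroup.mem_center_iff] at hx ⊢
  intro b
  calc b * x.coeff g = (single 1 b * x).coeff g := (coeff_single_one_mul x b g).symm
    _ = (x * single 1 b).coeff g := by rw [hx]
    _ = x.coeff g * b := coeff_mul_single_one x b g

end MonoidAlgebra

open MonoidAlgebra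

theorem base_ring_centrally_essential_of_group_ring
    (A : Type*) [Ring A] (G : Type*) [Group G]
    (h : IsCentrallyEssential (MonoidAlgebra A G)) :
    IsCentrallyEssential A := by
  intro a ha
  obtain ⟨c, hc, hne, hcent⟩ := h (single (1 : G) a) (single_ne_zero.mpr ha)
  obtain ⟨g, hg⟩ := exists_coeff_ne_zero hne
  rw [coeff_mul_single_one] at hg
  refine ⟨c.coeff g, coeff_mem_center hc g, hg, ?_⟩
  rw [← coeff_mul_single_one]
  exact coeff_mem_center hcent g
end

section
/- Let A be a nonzero (unital, associative) ring and G a group. If the group ring A[G] is a centrally essential ring, then G is an FC-group, i.e., every conjugacy class of G is finite. -/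
/-!
Elements with finite conjugacy class form a subgroup of `G`. If `z` is central in `A[G]`, then
`z` is constant on conjugacy classes, so every element of its (finite) support has a finite class.
Applying central essentiality to the basis element `g`, some central `c` makes `c * g` a nonzero
central element; for `a` in its support, both `a` and `a * g⁻¹` (which lies in the support of `c`)
have finite classes, hence so does `g = (a * g⁻¹)⁻¹ * a`.
-/

def fcCenter (G : Type*) [Group G] : Subgroup G where
  carrier := {g | {x : G | ∃ y : G, y * g * y⁻¹ = x}.Finite}
  one_mem' := by
    refine (Set.finite_singleton (1 : G)).subset ?_
    rintro _ ⟨y, rfl⟩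
    simp
  mul_mem' {a b} ha hb := by
    refine (ha.image2 (· * ·) hb).subset ?_
    rintro _ ⟨y, rfl⟩
    exact ⟨y * a * y⁻¹, ⟨y, rfl⟩, y * b * y⁻¹, ⟨y, rfl⟩, by group⟩
  inv_mem' {a} ha := by
    refine (ha.image Inv.inv).subset ?_
    rintro _ ⟨y, rfl⟩
    exact ⟨y * a * y⁻¹, ⟨y, rfl⟩, by group⟩

namespace MonoidAlgebra

variable {A G : Type*} [Ring A] [Group G] {z : MonoidAlgebra A G}

theorem coeff_conj_of_mem_center (hz : z ∈ Subring.center (MonoidAlgebra A G)) (x y : G) :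
    z.coeff (y * x * y⁻¹) = z.coeff x := by
  have hcomm := congrArg (fun w : MonoidAlgebra A G => w.coeff (y * x))
    ((Subring.mem_center_iff.mp hz) (single y 1))
  simpa [coeff_single_mul_apply, coeff_mul_single_apply, mul_assoc] using hcomm.symm

theorem mem_fcCenter_of_mem_center (hz : z ∈ Subring.center (MonoidAlgebra A G)) {x : G}
    (hx : z.coeff x ≠ 0) : x ∈ fcCenter G := by
  refine z.coeff.support.finite_toSet.subset ?_
  rintro _ ⟨y, rfl⟩
  simpa [coeff_conj_of_mem_center hz x y] using hx

end MonoidAlgebra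

open MonoidAlgebra in
theorem fc_group_of_centrally_essential_group_ring
    (A : Type*) [Ring A] [Nontrivial A] (G : Type*) [Group G]
    (h : IsCentrallyEssential (MonoidAlgebra A G)) :
    ∀ g : G, {x : G | ∃ y : G, y * g * y⁻¹ = x}.Finite := by
  intro g
  obtain ⟨c, hc, hcg_ne, hcg⟩ := h (single g 1) (by simp [single_eq_zero])
  obtain ⟨a, ha⟩ : ∃ a, (c * single g 1).coeff a ≠ 0 := by
    by_contra! hzero
    exact hcg_ne (coeff_inj.mp (Finsupp.ext hzero))
  have hc_ne : c.coeff (a * g⁻¹) ≠ 0 := by simpa [coeff_mul_single_apply] using ha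
  have hg : g = (a * g⁻¹)⁻¹ * a := by group
  rw [hg]
  exact (fcCenter G).mul_mem ((fcCenter G).inv_mem (mem_fcCenter_of_mem_center hc hc_ne))
    (mem_fcCenter_of_mem_center hcg ha)
end

section
/- Let A be a centrally essential (unital, associative) ring and let G be a commutative monoid. Then the monoid ring A[G] is a centrally essential ring. -/
/-!
Let `r ≠ 0` in `A[G]` with coefficients `a₁, …, aₙ`. Applying central essentiality of `A`
repeatedly, one finds a single central `c ∈ A` such that every `c * aᵢ` is central and at least
one is nonzero: if `c` already works for `a₁, …, aₖ` and `c * aₖ₊₁ ≠ 0`, replace `c` by `d * c`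
where `d * (c * aₖ₊₁)` is central and nonzero. Since `G` is commutative, an element of `A[G]`
whose coefficients are all central is central, so `single 1 c` is central and
`single 1 c * r` is a nonzero central element.
-/

open Finset

theorem IsCentrallyEssential.exists_mem_center_forall_mul_mem_center {A : Type*} [Ring A]
    (hA : IsCentrallyEssential A) {s : Finset A} (hs : s.Nonempty) (h0 : (0 : A) ∉ s) :
    ∃ c ∈ Subring.center A, (∀ a ∈ s, c * a ∈ Subring.center A) ∧ ∃ a ∈ s, c * a ≠ 0 := by
  induction hs using Finset.Nonempty.cons_induction with
  | singleton a =>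
    obtain ⟨d, hd, hda, hda_mem⟩ := hA a (Ne.symm (by simpa using h0))
    exact ⟨d, hd, by simpa using hda_mem, a, mem_singleton_self a, hda⟩
  | cons a s _ _ ih =>
    rw [mem_cons, not_or] at h0
    obtain ⟨c, hc, hcs, b, hb, hcb⟩ := ih h0.2
    by_cases hca : c * a = 0
    · refine ⟨c, hc, ?_, b, mem_cons_of_mem hb, hcb⟩
      exact (forall_mem_cons _ _).2 ⟨hca ▸ zero_mem _, hcs⟩
    · obtain ⟨d, hd, hdca, hdca_mem⟩ := hA _ hca
      refine ⟨d * c, mul_mem hd hc, (forall_mem_cons _ _).2 ⟨?_, fun x hx ↦ ?_⟩, a,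
        mem_cons_self a s, ?_⟩ <;> rw [mul_assoc]
      exacts [hdca_mem, mul_mem hd (hcs x hx), hdca]

theorem IsCentrallyEssential.exists_mem_center_forall_mul_apply_mem_center {A ι : Type*}
    [Ring A] (hA : IsCentrallyEssential A) {f : ι →₀ A} (hf : f ≠ 0) :
    ∃ c ∈ Subring.center A, (∀ i, c * f i ∈ Subring.center A) ∧ ∃ i, c * f i ≠ 0 := by
  obtain ⟨i, hi⟩ := Finsupp.support_nonempty_iff.2 hf
  obtain ⟨c, hc, hcf, a, ha, hca⟩ := hA.exists_mem_center_forall_mul_mem_center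
    ⟨_, Finsupp.mem_frange_of_mem hi⟩ fun h ↦ (Finsupp.mem_frange.1 h).1 rfl
  obtain ⟨-, j, rfl⟩ := Finsupp.mem_frange.1 ha
  refine ⟨c, hc, fun k ↦ ?_, j, hca⟩
  by_cases hk : f k = 0
  · rw [hk, mul_zero]
    exact zero_mem _
  · exact hcf _ (Finsupp.mem_frange_of_mem (Finsupp.mem_support_iff.2 hk))

namespace MonoidAlgebra

theorem single_one_mem_center_s5 {A G : Type*} [Semiring A] [Monoid G] {c : A}
    (hc : c ∈ Subsemiring.center A) : single (1 : G) c ∈ Subsemiring.center (MonoidAlgebra A G) :=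
  Subsemiring.mem_center_iff.2 fun x ↦
    (single_commute .one_left (fun a ↦ (Subsemiring.mem_center_iff.1 hc a).symm) x).eq.symm

theorem mem_center_of_forall_coeff_mem_center {A G : Type*} [Semiring A] [CommMonoid G]
    {z : MonoidAlgebra A G}
    (hz : ∀ g, z.coeff g ∈ Subsemiring.center A) : z ∈ Subsemiring.center (MonoidAlgebra A G) := by
  rw [← sum_coeff_single z]
  refine Subsemiring.sum_mem _ fun g _ ↦ Subsemiring.mem_center_iff.2 fun x ↦ ?_
  exact (single_commute (fun g' ↦ Commute.all g g')
    (fun a ↦ (Subsemiring.mem_center_iff.1 (hz g) a).symm) x).eq.symm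

end MonoidAlgebra

theorem monoid_ring_centrally_essential
    (A : Type*) [Ring A] (hA : IsCentrallyEssential A)
    (G : Type*) [CommMonoid G] :
    IsCentrallyEssential (MonoidAlgebra A G) := by
  intro r hr
  obtain ⟨c, hc, hcr, g, hcg⟩ :=
    hA.exists_mem_center_forall_mul_apply_mem_center (mt MonoidAlgebra.coeff_eq_zero.1 hr)
  have hcoeff := MonoidAlgebra.coeff_single_one_mul r c
  refine ⟨MonoidAlgebra.single 1 c, MonoidAlgebra.single_one_mem_center_s5 hc, fun h ↦ hcg ?_, ?_⟩
  · simpa [hcoeff] using congrArg (MonoidAlgebra.coeff · g) h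
  · exact MonoidAlgebra.mem_center_of_forall_coeff_mem_center fun g ↦ hcoeff g ▸ hcr g
end

section
/- Let R be a centrally essential ring. For every natural number n, all elements x_1, …, x_n, y_1, …, y_n, r of R: if x_1*y_1 + … + x_n*y_n = 1 and x_1*r*y_1 + … + x_n*r*y_n = 0, then r = 0. -/
section CentralSums

variable {R ι : Type*} [Semiring R] (s : Finset ι) (x y : ι → R)

theorem Finset.sum_mul_central_mul {z : R} (hz : ∀ g, g * z = z * g) :
    ∑ i ∈ s, x i * z * y i = z * ∑ i ∈ s, x i * y i := by
  rw [Finset.mul_sum]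
  exact Finset.sum_congr rfl fun i _ => by rw [hz, mul_assoc]

theorem Finset.sum_mul_central_mul_mul {c : R} (hc : ∀ g, g * c = c * g) (r : R) :
    ∑ i ∈ s, x i * (c * r) * y i = c * ∑ i ∈ s, x i * r * y i := by
  rw [Finset.mul_sum]
  exact Finset.sum_congr rfl fun i _ => by rw [← mul_assoc, hc, mul_assoc, mul_assoc, mul_assoc]

end CentralSums

theorem centrally_essential_quasi_identity
    (R : Type*) [Ring R] (hR : IsCentrallyEssential R)
    (n : ℕ) (x y : Fin n → R) (r : R)
    (h1 : (∑ i, x i * y i) = 1)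
    (h2 : (∑ i, x i * r * y i) = 0) :
    r = 0 := by
  by_contra hr
  obtain ⟨c, hc, hcr_ne, hcr⟩ := hR r hr
  rw [Subring.mem_center_iff] at hc hcr
  apply hcr_ne
  calc c * r = c * r * ∑ i, x i * y i := by rw [h1, mul_one]
    _ = ∑ i, x i * (c * r) * y i := (Finset.sum_mul_central_mul _ x y hcr).symm
    _ = c * ∑ i, x i * r * y i := Finset.sum_mul_central_mul_mul _ x y hc r
    _ = 0 := by rw [h2, mul_zero]
end

section
/- Every idempotent of a centrally essential ring is central: if R is a centrally essential ring and e ∈ R satisfies e² = e, then e lies in the center of R. -/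
theorem idempotent_central_of_centrally_essential
    (R : Type*) [Ring R] (hR : IsCentrallyEssential R)
    (e : R) (he : e * e = e) :
    e ∈ Subring.center R := by
  have key1 : ∀ r : R, e * r - e * r * e = 0 := by
    intro r
    by_contra hx
    obtain ⟨c, hc, hcx, hcxc⟩ := hR _ hx
    have hex : e * (e * r - e * r * e) = e * r - e * r * e := by
      simp only [mul_sub, ← mul_assoc, he]
    have hxe : (e * r - e * r * e) * e = 0 := by
      simp only [sub_mul, mul_assoc, he, sub_self]
    have h1 : e * (c * (e * r - e * r * e)) = c * (e * r - e * r * e) := by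
      rw [← mul_assoc, Subring.mem_center_iff.mp hc e, mul_assoc, hex]
    have h2 : c * (e * r - e * r * e) * e = 0 := by
      rw [mul_assoc, hxe, mul_zero]
    rw [Subring.mem_center_iff.mp hcxc e] at h1
    exact hcx (h1 ▸ h2)
  have key2 : ∀ r : R, r * e - e * r * e = 0 := by
    intro r
    by_contra hx
    obtain ⟨c, hc, hcx, hcxc⟩ := hR _ hx
    have hxe : (r * e - e * r * e) * e = r * e - e * r * e := by
      simp only [sub_mul, mul_assoc, he]
    have hex : e * (r * e - e * r * e) = 0 := by
      simp only [mul_sub, ← mul_assoc, he, sub_self]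
    have h1 : c * (r * e - e * r * e) * e = c * (r * e - e * r * e) := by
      rw [mul_assoc, hxe]
    have h2 : e * (c * (r * e - e * r * e)) = 0 := by
      rw [← mul_assoc, Subring.mem_center_iff.mp hc e, mul_assoc, hex, mul_zero]
    rw [Subring.mem_center_iff.mp hcxc e] at h2
    exact hcx (h2 ▸ h1).symm
  rw [Subring.mem_center_iff]
  intro g
  have h1 := sub_eq_zero.mp (key1 g)
  have h2 := sub_eq_zero.mp (key2 g)
  rw [h1, h2]
end

section
/- Let F be a field of characteristic p > 0 and let G be a finite p-group satisfying the following condition (*): for every element g of G not lying in the center Z(G), there exists a nontrivial subgroup H of Z(G) such that gH is contained in the conjugacy class of g. If the nilpotency class of G is greater than 2, then the group algebra F[G] is not a centrally essential ring. -/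
open MonoidAlgebra
open scoped commutatorElement

theorem sum_eq_zero_of_forall_apply_mul_eq {K R : Type*} [Group K] [Fintype K]
    [NonAssocSemiring R] (H : Subgroup K) {T : K → R} (hT : ∀ z, ∀ h ∈ H, T (z * h) = T z)
    (hH : (Nat.card H : R) = 0) : ∑ z, T z = 0 := by
  classical
  let e : K ≃ H × (Set.univ : Set (K ⧸ H)) :=
    (Equiv.Set.univ K).symm.trans (QuotientGroup.preimageMkEquivSubgroupProdSet H Set.univ)
  rw [← e.symm.sum_comp, Fintype.sum_prod_type_right]
  refine Finset.sum_eq_zero fun q _ => ?_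
  change ∑ h : H, T (q.1.out * h) = 0
  simp only [fun h : H => hT q.1.out h h.2, Finset.sum_const, Finset.card_univ, nsmul_eq_mul,
    ← Nat.card_eq_fintype_card, hH, zero_mul]

theorem IsPGroup.natCast_card_eq_zero {p : ℕ} [Fact p.Prime] {H R : Type*} [Group H] [Finite H]
    [Nontrivial H] [AddMonoidWithOne R] [CharP R p] (hH : IsPGroup p H) :
    (Nat.card H : R) = 0 := by
  obtain ⟨n, hn, hcard⟩ := hH.nontrivial_iff_card.1 ‹_›
  rw [hcard, CharP.cast_eq_zero_iff R p]
  exact dvd_pow_self p hn.ne'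

theorem exists_commutator_notMem_center {G : Type*} [Group G] {a : G}
    (ha : a ∉ Subgroup.upperCentralSeries G 2) : ∃ x, ⁅a, x⁆ ∉ Subgroup.center G := by
  by_contra! h
  exact ha <| Subgroup.mem_upperCentralSeries_succ_iff.2 fun x => by
    rw [Subgroup.upperCentralSeries_one]; exact h x

theorem eq_zero_of_apply_mul_eq_of_apply_eq_zero {G M : Type*} [Group G] [Zero M]
    (S : Subgroup G) {k : G} (hk : k ∉ S) {f : G → M} (hf : ∀ y, f (y * k) = f y)
    (hS : ∀ y ∉ S, f y = 0) : f = 0 := by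
  funext y
  by_cases hy : y ∈ S
  · rw [← hf, hS _ fun hyk => hk (by simpa using S.mul_mem (S.inv_mem hy) hyk)]; rfl
  · exact hS y hy

namespace MonoidAlgebra

variable {F G : Type*} [Ring F] [Group G]

theorem coeff_conj_of_mem_center_s9 {c : F[G]} (hc : c ∈ Subring.center F[G]) (x y : G) :
    c.coeff (x * y * x⁻¹) = c.coeff y := by
  have := congr(($(Subring.mem_center_iff.1 hc (single x⁻¹ 1))).coeff (y * x⁻¹))
  simpa [mul_assoc] using this

theorem single_one_mem_center_s9 {z : G} (hz : z ∈ Subgroup.center G) :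
    single z (1 : F) ∈ Subring.center F[G] :=
  Subring.mem_center_iff.2 fun u => (single_commute (fun g => (Subgroup.mem_center_iff.1 hz g).symm)
    (fun _ => .one_left _) u).eq.symm

theorem coeff_mul_commutator {w : F[G]} (hw : w ∈ Subring.center F[G]) {a : G}
    (hwa : w * single a 1 ∈ Subring.center F[G]) (x y : G) :
    w.coeff (y * ⁅a, x⁆) = w.coeff y := by
  have hcomm : w * single (x * a) 1 = w * single (a * x) 1 := by
    calc w * single (x * a) 1 = single x 1 * (w * single a 1) := by
          rw [← mul_assoc, Subring.mem_center_iff.1 hw, mul_assoc, single_mul_single, one_mul]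
      _ = w * single (a * x) 1 := by
          rw [Subring.mem_center_iff.1 hwa, mul_assoc, single_mul_single, one_mul]
  have := congr(($hcomm).coeff (y * (a * x)))
  simp only [coeff_mul_single_apply, mul_one, mul_inv_cancel_right] at this
  rw [← this, commutatorElement_def]
  group

variable (F G) [Fintype (Subgroup.center G)]

noncomputable def centerSum : F[G] := ∑ z : Subgroup.center G, single (z : G) 1

variable {F G}

theorem centerSum_mem_center : centerSum F G ∈ Subring.center F[G] :=
  Subring.sum_mem _ fun z _ => single_one_mem_center_s9 z.2

theorem coeff_mul_centerSum (u : F[G]) (y : G) :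
    (u * centerSum F G).coeff y = ∑ z : Subgroup.center G, u.coeff (y * z) := by
  simp only [centerSum, Finset.mul_sum, coeff_sum, Finsupp.finsetSum_apply,
    coeff_mul_single_apply, mul_one]
  exact Fintype.sum_equiv (Equiv.inv _) _ _ fun z => by simp

theorem single_mul_centerSum_ne_zero [Nontrivial F] (a : G) :
    single a (1 : F) * centerSum F G ≠ 0 := by
  classical
  intro h
  have := congr(($h).coeff a)
  simp only [coeff_single_mul_apply, one_mul, inv_mul_cancel, centerSum, coeff_sum,
    Finsupp.finsetSum_apply, coeff_single, Finsupp.single_apply] at this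
  simp at this

theorem coeff_mul_centerSum_eq_zero {c : F[G]} (hc : c ∈ Subring.center F[G]) {y : G}
    {H : Subgroup G} (hHZ : H ≤ Subgroup.center G) (hH : (Nat.card H : F) = 0)
    (hconj : ∀ h ∈ H, ∃ x : G, x * y * x⁻¹ = y * h) :
    (c * centerSum F G).coeff y = 0 := by
  rw [coeff_mul_centerSum]
  refine sum_eq_zero_of_forall_apply_mul_eq (H.subgroupOf (Subgroup.center G))
    (fun z h hh => ?_) ?_
  · obtain ⟨x, hx⟩ := hconj h (Subgroup.mem_subgroupOf.1 hh)
    have key : x * (y * z) * x⁻¹ = y * (z * h : Subgroup.center G) := by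
      calc x * (y * z) * x⁻¹ = x * y * x⁻¹ * z := by
            rw [mul_assoc, mul_assoc, ← Subgroup.mem_center_iff.1 z.2 x⁻¹, ← mul_assoc,
              ← mul_assoc]
        _ = y * (z * h : Subgroup.center G) := by
            rw [hx, Subgroup.coe_mul, mul_assoc, Subgroup.mem_center_iff.1 h.2 z]
    rw [← key, coeff_conj_of_mem_center_s9 hc]
  · rwa [Nat.card_congr (Subgroup.subgroupOfEquivOfLe hHZ).toEquiv]

end MonoidAlgebra

theorem not_centrally_essential_of_condition_star
    (F : Type*) [Field F] (p : ℕ) [Fact p.Prime] [CharP F p]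
    (G : Type*) [Group G] [Fintype G] (hG : IsPGroup p G)
    (hstar : ∀ g : G, g ∉ Subgroup.center G →
      ∃ H : Subgroup G, H ≤ Subgroup.center G ∧ H ≠ ⊥ ∧
        ∀ h ∈ H, ∃ x : G, x * g * x⁻¹ = g * h)
    (h2 : upperCentralSeries G 2 ≠ ⊤) :
    ¬ IsCentrallyEssential (MonoidAlgebra F G) := by
  classical
  intro hCE
  obtain ⟨a, ha⟩ : ∃ a, a ∉ upperCentralSeries G 2 := by
    by_contra! h
    exact h2 (eq_top_iff.2 fun x _ => h x)
  obtain ⟨x, hx⟩ := exists_commutator_notMem_center ha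
  obtain ⟨c, hc, hcr0, hcr⟩ := hCE _ (single_mul_centerSum_ne_zero (F := F) a)
  set w := c * centerSum F G
  have hw : w ∈ Subring.center F[G] := Subring.mul_mem _ hc centerSum_mem_center
  have hcr_eq : c * (single a 1 * centerSum F G) = w * single a 1 := by
    rw [Subring.mem_center_iff.1 centerSum_mem_center (single a 1), ← mul_assoc]
  have hw_off_center (y : G) (hy : y ∉ Subgroup.center G) : w.coeff y = 0 := by
    obtain ⟨H, hHZ, hH, hconj⟩ := hstar y hy
    have : Nontrivial H := (Subgroup.nontrivial_iff_ne_bot H).2 hH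
    exact coeff_mul_centerSum_eq_zero hc hHZ (hG.to_subgroup H).natCast_card_eq_zero hconj
  have hw0 : w = 0 := coeff_eq_zero.1 <| Finsupp.coe_eq_zero.1 <|
    eq_zero_of_apply_mul_eq_of_apply_eq_zero _ hx (coeff_mul_commutator hw (hcr_eq ▸ hcr) x)
      hw_off_center
  exact hcr0 (by rw [hcr_eq, hw0, zero_mul])
end

section
/- Let G be a group such that the centralizer of Z₂(G) in G is contained in Z₂(G), where Z₂(G) is the second term of the upper central series of G. Then G satisfies condition (*): for every element g of G not lying in the center Z(G), there exists a nontrivial subgroup H of Z(G) such that gH is contained in the conjugacy class of g. -/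
theorem condition_star_of_centralizer_le_second_center
    (G : Type*) [Group G]
    (hc : Subgroup.centralizer (upperCentralSeries G 2 : Subgroup G) ≤ upperCentralSeries G 2) :
    ∀ g : G, g ∉ Subgroup.center G →
      ∃ H : Subgroup G, H ≤ Subgroup.center G ∧ H ≠ ⊥ ∧
        ∀ h ∈ H, ∃ x : G, x * g * x⁻¹ = g * h := by
  intro g hg
  refine ⟨{ carrier := {h | h ∈ Subgroup.center G ∧ ∃ x : G, x * g * x⁻¹ * g⁻¹ = h}
            one_mem' := ⟨Subgroup.one_mem _, 1, by group⟩
            mul_mem' := ?_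
            inv_mem' := ?_ }, ?_, ?_, ?_⟩
  · rintro h₁ h₂ ⟨c₁, x₁, rfl⟩ ⟨c₂, x₂, rfl⟩
    refine ⟨Subgroup.mul_mem _ c₁ c₂, x₁ * x₂, ?_⟩
    have hcomm : x₁ * (x₂ * g * x₂⁻¹ * g⁻¹) = (x₂ * g * x₂⁻¹ * g⁻¹) * x₁ :=
      (Subgroup.mem_center_iff.mp c₂) x₁
    calc x₁ * x₂ * g * (x₁ * x₂)⁻¹ * g⁻¹
        = x₁ * (x₂ * g * x₂⁻¹ * g⁻¹) * (g * x₁⁻¹ * g⁻¹) := by group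
      _ = (x₂ * g * x₂⁻¹ * g⁻¹) * x₁ * (g * x₁⁻¹ * g⁻¹) := by rw [hcomm]
      _ = (x₂ * g * x₂⁻¹ * g⁻¹) * (x₁ * g * x₁⁻¹ * g⁻¹) := by group
      _ = x₁ * g * x₁⁻¹ * g⁻¹ * (x₂ * g * x₂⁻¹ * g⁻¹) :=
          (Subgroup.mem_center_iff.mp c₁ _)
  · rintro h ⟨c, x, rfl⟩
    refine ⟨Subgroup.inv_mem _ c, x⁻¹, ?_⟩
    have hcomm : x⁻¹ * (x * g * x⁻¹ * g⁻¹)⁻¹ = (x * g * x⁻¹ * g⁻¹)⁻¹ * x⁻¹ :=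
      Subgroup.mem_center_iff.mp (Subgroup.inv_mem _ c) x⁻¹
    calc x⁻¹ * g * x⁻¹⁻¹ * g⁻¹
        = x⁻¹ * (x * g * x⁻¹ * g⁻¹)⁻¹ * x := by group
      _ = (x * g * x⁻¹ * g⁻¹)⁻¹ * x⁻¹ * x := by rw [hcomm]
      _ = (x * g * x⁻¹ * g⁻¹)⁻¹ := by group
  · exact fun h hh => hh.1
  · -- nontriviality
    rw [Ne, Subgroup.eq_bot_iff_forall]
    push_neg
    by_cases hg2 : g ∈ upperCentralSeries G 2
    · -- g ∈ Z₂ : pick y not commuting with g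
      rw [Subgroup.mem_center_iff] at hg
      push_neg at hg
      obtain ⟨y, hy⟩ := hg
      have hcent : y * g * y⁻¹ * g⁻¹ ∈ Subgroup.center G := by
        have := (mem_upperCentralSeries_succ_iff).mp hg2 y
        rw [upperCentralSeries_one] at this
        have : (g * y * g⁻¹ * y⁻¹)⁻¹ ∈ Subgroup.center G := Subgroup.inv_mem _ this
        simpa [mul_assoc] using this
      refine ⟨y * g * y⁻¹ * g⁻¹, ⟨hcent, y, rfl⟩, ?_⟩
      intro h1
      apply hy
      have e : y * g = (y * g * y⁻¹ * g⁻¹) * (g * y) := by group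
      rw [e, h1, one_mul]
    · -- g ∉ Z₂ : g not in centralizer
      have hgc : g ∉ Subgroup.centralizer (upperCentralSeries G 2 : Subgroup G) :=
        fun h => hg2 (hc h)
      rw [Subgroup.mem_centralizer_iff] at hgc
      push_neg at hgc
      obtain ⟨z, hz, hzg⟩ := hgc
      have hcent : z * g * z⁻¹ * g⁻¹ ∈ Subgroup.center G := by
        have := (mem_upperCentralSeries_succ_iff).mp hz g
        rwa [upperCentralSeries_one] at this
      refine ⟨z * g * z⁻¹ * g⁻¹, ⟨hcent, z, rfl⟩, ?_⟩
      intro h1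
      apply hzg
      have : z * g = (z * g * z⁻¹ * g⁻¹) * (g * z) := by group
      rw [this, h1, one_mul]
  · rintro h ⟨hcen, x, rfl⟩
    refine ⟨x, ?_⟩
    rw [Subgroup.mem_center_iff.mp hcen g]
    group
end

section
/- Let F be a field of characteristic zero and let G be any group. Then the group algebra F[G] is a centrally essential ring if and only if F[G] is commutative (equivalently, if and only if G is commutative). -/
namespace IsCentrallyEssential

variable {R : Type*} [Ring R]

lemma of_forall_mul_comm (h : ∀ a b : R, a * b = b * a) : IsCentrallyEssential R :=
  fun r hr ↦ ⟨1, one_mem _, by rwa [one_mul],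
    by rw [one_mul]; exact Subring.mem_center_iff.mpr fun g ↦ h g r⟩

lemma exists_mul_mem_center_ne_zero_mul_mem_center (hR : IsCentrallyEssential R) {x : R}
    (hx : x ≠ 0) (a : R) : ∃ c ∈ Subring.center R,
      c * x ∈ Subring.center R ∧ c * x ≠ 0 ∧ c * x * a ∈ Subring.center R := by
  obtain ⟨d, hd, hdx, hdx_mem⟩ := hR x hx
  by_cases hdxa : d * x * a = 0
  · exact ⟨d, hd, hdx_mem, hdx, hdxa ▸ zero_mem _⟩
  obtain ⟨e, he, hedxa, hedxa_mem⟩ := hR _ hdxa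
  refine ⟨e * d, mul_mem he hd, ?_, ?_, ?_⟩
  · rw [mul_assoc]
    exact mul_mem he hdx_mem
  · intro h
    exact hedxa (by rw [← mul_assoc, ← mul_assoc, h, zero_mul])
  · simpa only [mul_assoc] using hedxa_mem

theorem forall_mul_comm (hR : IsCentrallyEssential R)
    (hZ : ∀ t ∈ Subring.center R, t * t = 0 → t = 0) (a b : R) : a * b = b * a := by
  by_contra hab
  obtain ⟨c, hc, ht, ht0, hta⟩ :=
    hR.exists_mul_mem_center_ne_zero_mul_mem_center (sub_ne_zero.mpr hab) a
  set t := c * (a * b - b * a)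
  have htx : t * (a * b - b * a) = 0 := by
    rw [mul_sub, sub_eq_zero]
    calc t * (a * b) = t * a * b := (mul_assoc _ _ _).symm
      _ = b * (t * a) := (Subring.mem_center_iff.mp hta b).symm
      _ = t * (b * a) := by rw [← mul_assoc, Subring.mem_center_iff.mp ht b, mul_assoc]
  refine ht0 (hZ t ht ?_)
  calc t * t = c * (t * (a * b - b * a)) := by
        rw [← mul_assoc, Subring.mem_center_iff.mp hc t, mul_assoc]
    _ = 0 := by rw [htx, mul_zero]

end IsCentrallyEssential

theorem Algebra.FiniteType.nonempty_algHom_of_isAlgClosed (k R K : Type*) [Field k] [CommRing R]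
    [Nontrivial R] [Algebra k R] [Algebra.FiniteType k R] [Field K] [IsAlgClosed K]
    [Algebra k K] : Nonempty (R →ₐ[k] K) := by
  obtain ⟨m, hm⟩ := Ideal.exists_maximal R
  let : Field (R ⧸ m) := Ideal.Quotient.field m
  have : Algebra.FiniteType k (R ⧸ m) :=
    .of_surjective (Ideal.Quotient.mkₐ k m) (Ideal.Quotient.mkₐ_surjective k m)
  have : Module.Finite k (R ⧸ m) := finite_of_finite_type_of_isJacobsonRing k (R ⧸ m)
  exact ⟨(IsAlgClosed.lift : R ⧸ m →ₐ[k] K).comp (Ideal.Quotient.mkₐ k m)⟩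

namespace MonoidAlgebra

section Center

variable {k k' G : Type*} [CommRing k] [CommRing k'] [Monoid G]

lemma mem_center_iff_forall_single_one_mul {x : MonoidAlgebra k G} :
    x ∈ Subring.center (MonoidAlgebra k G) ↔ ∀ g : G, single g 1 * x = x * single g 1 := by
  refine ⟨fun hx g ↦ Subring.mem_center_iff.mp hx _, fun hx ↦ Subring.mem_center_iff.mpr ?_⟩
  intro y
  induction y using induction_linear with
  | zero => simp
  | add y₁ y₂ h₁ h₂ => rw [add_mul, mul_add, h₁, h₂]
  | single g r => rw [← mul_one r, ← smul_single', smul_mul_assoc, mul_smul_comm, hx]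

lemma mapRingHom_mem_center (φ : k →+* k') {x : MonoidAlgebra k G}
    (hx : x ∈ Subring.center (MonoidAlgebra k G)) :
    mapRingHom G φ x ∈ Subring.center (MonoidAlgebra k' G) :=
  mem_center_iff_forall_single_one_mul.mpr fun g ↦ by
    simpa [map_mul] using congrArg (mapRingHom G φ) (Subring.mem_center_iff.mp hx (single g 1))

end Center

lemma forall_mul_comm_iff {k G : Type*} [CommSemiring k] [Nontrivial k] [Monoid G] :
    (∀ x y : MonoidAlgebra k G, x * y = y * x) ↔ ∀ a b : G, a * b = b * a := by
  refine ⟨fun h a b ↦ ?_, fun h x y ↦ ?_⟩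
  · simpa [single_mul_single, single_left_inj] using h (single a 1) (single b 1)
  induction x using induction_linear with
  | zero => simp
  | add x₁ x₂ h₁ h₂ => rw [add_mul, mul_add, h₁, h₂]
  | single a r =>
    induction y using induction_linear with
    | zero => simp
    | add y₁ y₂ h₁ h₂ => rw [add_mul, mul_add, h₁, h₂]
    | single b s => rw [single_mul_single, single_mul_single, h a b, mul_comm]

section Star

variable {k G : Type*} [Semiring k] [StarRing k] [Group G]

noncomputable instance : Star (MonoidAlgebra k G) where
  star x := .ofCoeff <| (x.coeff.mapRange star (star_zero k)).equivMapDomain (Equiv.inv G)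

@[simp]
lemma coeff_star (x : MonoidAlgebra k G) (g : G) : (star x).coeff g = star (x.coeff g⁻¹) := by
  simp [star]

@[simp]
lemma star_single (g : G) (r : k) : star (single g r) = single g⁻¹ (star r) := by
  classical
  ext h
  simp [Finsupp.single_apply, inv_eq_iff_eq_inv, apply_ite star]

noncomputable instance : StarAddMonoid (MonoidAlgebra k G) where
  star_involutive x := by ext; simp
  star_add x y := by ext; simp

noncomputable instance : StarRing (MonoidAlgebra k G) where
  star_add := star_add
  star_mul x y := by
    induction x using induction_linear with
    | zero => simp
    | add x₁ x₂ h₁ h₂ => simp [add_mul, mul_add, h₁, h₂]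
    | single a r =>
      induction y using induction_linear with
      | zero => simp
      | add y₁ y₂ h₁ h₂ => simp [add_mul, mul_add, h₁, h₂]
      | single b s => simp [single_mul_single]

end Star

section RCLike

variable {𝕜 G : Type*} [RCLike 𝕜] [Group G]

lemma coeff_one_mul_star_self (x : MonoidAlgebra 𝕜 G) :
    (x * star x).coeff 1 = ((∑ g ∈ x.coeff.support, ‖x.coeff g‖ ^ 2 : ℝ) : 𝕜) := by
  simp [coeff_mul_apply_left, Finsupp.sum, RCLike.mul_conj]

lemma eq_zero_of_mul_star_self_eq_zero {x : MonoidAlgebra 𝕜 G} (hx : x * star x = 0) :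
    x = 0 := by
  have hsum := x.coeff_one_mul_star_self
  rw [hx, coeff_zero, Finsupp.zero_apply, eq_comm, RCLike.ofReal_eq_zero,
    Finset.sum_eq_zero_iff_of_nonneg fun _ _ ↦ by positivity] at hsum
  ext g
  by_contra hg
  rw [coeff_zero, Finsupp.zero_apply] at hg
  exact hg (by simpa using hsum g (Finsupp.mem_support_iff.mpr hg))

lemma eq_zero_of_mem_center_of_mul_self_eq_zero_of_rclike {t : MonoidAlgebra 𝕜 G}
    (ht : t ∈ Subring.center (MonoidAlgebra 𝕜 G)) (htt : t * t = 0) : t = 0 := by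
  have hcomm : star t * t = t * star t := Subring.mem_center_iff.mp ht (star t)
  apply eq_zero_of_mul_star_self_eq_zero
  apply eq_zero_of_mul_star_self_eq_zero
  calc t * star t * star (t * star t) = t * (star t * t) * star t := by
        simp only [star_mul, star_star, mul_assoc]
    _ = (t * t) * (star t * star t) := by rw [hcomm]; simp only [mul_assoc]
    _ = 0 := by rw [htt, zero_mul]

end RCLike

theorem eq_zero_of_mem_center_of_mul_self_eq_zero {F G : Type*} [Field F] [CharZero F] [Group G]
    {t : MonoidAlgebra F G} (ht : t ∈ Subring.center (MonoidAlgebra F G)) (htt : t * t = 0) :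
    t = 0 := by
  classical
  by_contra ht0
  obtain ⟨g₀, hg₀⟩ := Finsupp.ne_iff.mp (coeff_injective.ne ht0)
  rw [coeff_zero, Finsupp.zero_apply] at hg₀
  let R := Algebra.adjoin ℚ (↑(insert (t.coeff g₀)⁻¹ t.coeff.frange) : Set F)
  have : Algebra.FiniteType ℚ R :=
    (Subalgebra.fg_iff_finiteType R).mp (Subalgebra.fg_adjoin_finset _)
  obtain ⟨φ⟩ := Algebra.FiniteType.nonempty_algHom_of_isAlgClosed ℚ R ℂ
  let ι := mapRingHom G (algebraMap R F)
  have hι : Function.Injective ι := map_injective _ Subtype.val_injective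
  obtain ⟨t₀, ht₀⟩ : t ∈ Set.range ι := by
    rw [coe_mapRingHom, range_map]
    intro g
    by_cases hg : t.coeff g = 0
    · exact ⟨0, by simp [hg]⟩
    · exact ⟨⟨_, Algebra.subset_adjoin (Finset.mem_insert_of_mem
        (Finsupp.mem_frange.mpr ⟨hg, g, rfl⟩))⟩, rfl⟩
  have ht₀_mem : t₀ ∈ Subring.center (MonoidAlgebra R G) := Subring.mem_center_iff.mpr fun y ↦
    hι (by rw [map_mul, map_mul, ht₀]; exact Subring.mem_center_iff.mp ht _)
  have ht₀t₀ : t₀ * t₀ = 0 := hι (by rw [map_mul, ht₀, htt, map_zero])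
  have hunit : IsUnit (t₀.coeff g₀) := by
    have hcoeff : (t₀.coeff g₀ : F) = t.coeff g₀ := by simp [← ht₀, ι]
    refine .of_mul_eq_one
      ⟨(t.coeff g₀)⁻¹, Algebra.subset_adjoin (Finset.mem_insert_self _ _)⟩ (Subtype.ext ?_)
    simp [hcoeff, hg₀]
  have hz : mapRingHom G φ.toRingHom t₀ = 0 :=
    eq_zero_of_mem_center_of_mul_self_eq_zero_of_rclike (mapRingHom_mem_center _ ht₀_mem)
      (by rw [← map_mul, ht₀t₀, map_zero])
  exact (hunit.map φ).ne_zero (by simpa using congrArg (fun u ↦ u.coeff g₀) hz)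

end MonoidAlgebra

theorem centrally_essential_char_zero_iff_commutative
    (F : Type*) [Field F] [CharZero F] (G : Type*) [Group G] :
    (IsCentrallyEssential (MonoidAlgebra F G) ↔
      ∀ x y : MonoidAlgebra F G, x * y = y * x) ∧
    (IsCentrallyEssential (MonoidAlgebra F G) ↔ ∀ a b : G, a * b = b * a) := by
  have h : IsCentrallyEssential (MonoidAlgebra F G) ↔ ∀ x y : MonoidAlgebra F G, x * y = y * x :=
    ⟨fun hR ↦ hR.forall_mul_comm fun _ ↦ MonoidAlgebra.eq_zero_of_mem_center_of_mul_self_eq_zero,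
      .of_forall_mul_comm⟩
  exact ⟨h, h.trans MonoidAlgebra.forall_mul_comm_iff⟩
end

section
/- Every centrally essential semiprime ring is commutative: if R is a semiprime ring (R has no nonzero nilpotent two-sided ideals; equivalently, for any two-sided ideal I, I² = 0 implies I = 0) that is centrally essential, then R is commutative. -/
/-- In a semiprime ring, a central element of square zero is zero: the two-sided ideal
`zR` squares to zero. -/
lemma central_sq_zero_eq_zero {R : Type*} [Ring R]
    (hsp : ∀ I : TwoSidedIdeal R, (∀ x ∈ I, ∀ y ∈ I, x * y = 0) → I = ⊥)
    (z : R) (hz : ∀ g : R, g * z = z * g) (hsq : z * z = 0) : z = 0 := by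
  set I : TwoSidedIdeal R := TwoSidedIdeal.mk' {x | ∃ r : R, x = z * r}
    ⟨0, by rw [mul_zero]⟩
    (fun {a b} ⟨r, hr⟩ ⟨s, hs⟩ => ⟨r + s, by rw [hr, hs, mul_add]⟩)
    (fun {a} ⟨r, hr⟩ => ⟨-r, by rw [hr, mul_neg]⟩)
    (fun {a b} ⟨r, hr⟩ => ⟨a * r, by rw [hr, ← mul_assoc, hz a, mul_assoc]⟩)
    (fun {a b} ⟨r, hr⟩ => ⟨r * b, by rw [hr, mul_assoc]⟩) with hI
  have hIbot : I = ⊥ := by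
    apply hsp
    intro a ha b hb
    rw [hI, TwoSidedIdeal.mem_mk'] at ha hb
    obtain ⟨r, hr⟩ := ha
    obtain ⟨s, hs⟩ := hb
    rw [hr, hs, mul_assoc, ← mul_assoc r, hz r, mul_assoc, ← mul_assoc,
      ← mul_assoc, hsq, zero_mul, zero_mul]
  have hzI : z ∈ I := by
    rw [hI, TwoSidedIdeal.mem_mk']
    exact ⟨1, by rw [mul_one]⟩
  rw [hIbot, TwoSidedIdeal.mem_bot] at hzI
  exact hzI

theorem commutative_of_centrally_essential_semiprime
    (R : Type*) [Ring R]
    (hsp : ∀ I : TwoSidedIdeal R, (∀ x ∈ I, ∀ y ∈ I, x * y = 0) → I = ⊥)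
    (hce : IsCentrallyEssential R) :
    ∀ x y : R, x * y = y * x := by
  intro x y
  by_contra hxy
  have hd : x * y - y * x ≠ 0 := sub_ne_zero.mpr hxy
  obtain ⟨c, hc, hzne, hzc⟩ := hce _ hd
  rw [Subring.mem_center_iff] at hc hzc
  set z : R := c * (x * y - y * x) with hzdef
  set a : R := c * x with hadef
  have hza : z = a * y - y * a := by
    rw [hzdef, hadef, mul_sub, mul_assoc, ← mul_assoc y c x, hc y, mul_assoc]
  clear_value z a
  clear hzdef hadef hd hxy
  by_cases h0 : z * a = 0
  · -- z² = (z*a)*y - y*(z*a) = 0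
    have hsq : z * z = 0 := by
      nth_rewrite 2 [hza]
      rw [mul_sub, ← mul_assoc, ← mul_assoc, h0, zero_mul, ← hzc y,
        mul_assoc, h0, mul_zero, sub_zero]
    exact hzne (central_sq_zero_eq_zero hsp z (fun g => hzc g) hsq)
  · obtain ⟨c', hc', h1, h2⟩ := hce _ h0
    rw [Subring.mem_center_iff] at hc' h2
    have e1 : y * (c' * (z * a)) = c' * (z * (y * a)) := by
      rw [← mul_assoc y c' (z * a), hc' y, mul_assoc c' y (z * a),
        ← mul_assoc y z a, hzc y, mul_assoc z y a]
    have e2 : c' * (z * a) * y = c' * (z * (a * y)) := by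
      rw [mul_assoc c' (z * a) y, mul_assoc z a y]
    have hzz : z * z = z * (a * y) - z * (y * a) := by
      nth_rewrite 2 [hza]
      rw [mul_sub]
    have key : c' * (z * z) = 0 := by
      rw [hzz, mul_sub, ← e2, ← e1, h2 y, sub_self]
    have hw : (c' * z) * (c' * z) = 0 := by
      rw [mul_assoc c' z (c' * z), ← mul_assoc z c' z, hc' z, mul_assoc c' z z, key, mul_zero]
    have hwc : ∀ g : R, g * (c' * z) = (c' * z) * g := by
      intro g
      rw [← mul_assoc g c' z, hc' g, mul_assoc c' g z, hzc g, ← mul_assoc c' z g]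
    have hw0 : c' * z = 0 := central_sq_zero_eq_zero hsp _ hwc hw
    exact h1 (by rw [← mul_assoc c' z a, hw0, zero_mul])
end

section
/- Let F = GF(2) be the field with two elements and let Q₈ be the quaternion group of order 8 (generated by a, b with a⁴ = 1, a² = b², a b a⁻¹ = b⁻¹). Then the group algebra F[Q₈] is a noncommutative centrally essential ring (of cardinality 256). -/
theorem IsCentrallyEssential.of_mul_mem_center {R : Type*} [Ring R] (w : R)
    (hw : ∀ x, w * x ∈ Subring.center R) (hker : ∀ x, w * x = 0 → x ∈ Subring.center R) :
    IsCentrallyEssential R := by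
  intro r hr
  by_cases hc : r ∈ Subring.center R
  · exact ⟨1, Subring.one_mem _, by rwa [one_mul], by rwa [one_mul]⟩
  · exact ⟨w, by simpa using hw 1, fun h => hc (hker r h), hw r⟩

section CommutatorSetSubset

variable {G : Type*} [Group G] {z : G}

theorem mul_comm_or_eq_mul_mul_of_commutatorSet_subset (hG : commutatorSet G ⊆ {1, z})
    (g h : G) : h * g = g * h ∨ h * g = z * g * h := by
  rcases hG (commutator_mem_commutatorSet h g) with hc | hc
  · exact .inl (commutatorElement_eq_one_iff_mul_comm.mp hc)
  · rw [commutatorElement_def] at hc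
    exact .inr (by rw [← hc]; group)

theorem mem_center_of_commutatorSet_subset (hz : z * z = 1) (hG : commutatorSet G ⊆ {1, z}) :
    z ∈ Subgroup.center G := by
  rw [Subgroup.mem_center_iff]
  intro h
  rcases mul_comm_or_eq_mul_mul_of_commutatorSet_subset hG z h with hc | hc
  · exact hc
  · rw [hz, one_mul, mul_eq_left] at hc
    rw [hc, mul_one, one_mul]

theorem mul_comm_or_swap_of_commutatorSet_subset (hz : z * z = 1) (hG : commutatorSet G ⊆ {1, z})
    (g h : G) : (h * g = g * h ∧ h * (z * g) = z * g * h) ∨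
      (h * g = z * g * h ∧ h * (z * g) = g * h) := by
  have hcomm : ∀ x, x * z = z * x := fun x =>
    Subgroup.mem_center_iff.mp (mem_center_of_commutatorSet_subset hz hG) x
  rcases mul_comm_or_eq_mul_mul_of_commutatorSet_subset hG g h with hc | hc
  · refine .inl ⟨hc, ?_⟩
    rw [← mul_assoc, hcomm, mul_assoc, hc, mul_assoc]
  · refine .inr ⟨hc, ?_⟩
    rw [← mul_assoc, hcomm, mul_assoc, hc, ← mul_assoc, ← mul_assoc, hz, one_mul]

end CommutatorSetSubset

namespace MonoidAlgebra

theorem mem_center_of_forall_single_mul_eq {k G : Type*} [Ring k] [Monoid G] {x : k[G]}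
    (hx : ∀ g c, single g c * x = x * single g c) : x ∈ Subring.center k[G] := by
  rw [Subring.mem_center_iff]
  intro y
  induction y using MonoidAlgebra.induction with
  | zero => rw [zero_mul, mul_zero]
  | single_add g c y _ _ ih => rw [add_mul, mul_add, ih, hx]

theorem exists_mul_ne_mul {k G : Type*} [Semiring k] [Nontrivial k] [Monoid G] {g h : G}
    (hgh : g * h ≠ h * g) : ∃ x y : k[G], x * y ≠ y * x :=
  ⟨of k G g, of k G h, by rwa [← map_mul, ← map_mul, of_injective.ne_iff]⟩

theorem natCard_eq_pow {k G : Type*} [Semiring k] [Finite G] :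
    Nat.card k[G] = Nat.card k ^ Nat.card G := by
  rw [Nat.card_congr (coeffEquiv.trans Finsupp.equivFunOnFinite), Nat.card_fun]

section CommutatorSetSubset

variable {k G : Type*} [CommRing k] [Group G] {z : G}

theorem one_add_of_mul_single_mem_center (hz : z * z = 1) (hG : commutatorSet G ⊆ {1, z})
    (g : G) (c : k) : (1 + of k G z) * single g c ∈ Subring.center k[G] := by
  refine mem_center_of_forall_single_mul_eq fun h d => ?_
  rw [add_mul, one_mul, of_apply, single_mul_single, one_mul, mul_add, add_mul,
    single_mul_single, single_mul_single, single_mul_single, single_mul_single, mul_comm d c]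
  rcases mul_comm_or_swap_of_commutatorSet_subset hz hG g h with ⟨h₁, h₂⟩ | ⟨h₁, h₂⟩
  · rw [h₁, h₂]
  · rw [h₁, h₂, add_comm]

theorem one_add_of_mul_mem_center (hz : z * z = 1) (hG : commutatorSet G ⊆ {1, z}) (x : k[G]) :
    (1 + of k G z) * x ∈ Subring.center k[G] := by
  induction x using MonoidAlgebra.induction with
  | zero => rw [mul_zero]; exact Subring.zero_mem _
  | single_add g c x _ _ ih =>
    rw [mul_add]
    exact Subring.add_mem _ (one_add_of_mul_single_mem_center hz hG g c) ih

theorem mem_center_of_one_add_of_mul_eq_zero [CharP k 2] (hz : z * z = 1)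
    (hG : commutatorSet G ⊆ {1, z}) {x : k[G]} (hx : (1 + of k G z) * x = 0) :
    x ∈ Subring.center k[G] := by
  have hzx : ∀ g, x.coeff (z * g) = x.coeff g := fun g => by
    have h0 := congr_arg (fun y : k[G] => y.coeff g) hx
    simp only [add_mul, one_mul, of_apply, coeff_add, Finsupp.add_apply, coeff_single_mul_apply,
      inv_eq_of_mul_eq_one_right hz, coeff_zero, Finsupp.coe_zero, Pi.zero_apply] at h0
    exact (CharTwo.add_eq_zero.mp h0).symm
  refine mem_center_of_forall_single_mul_eq fun h d => ?_
  ext g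
  rw [coeff_single_mul_apply, coeff_mul_single_apply, mul_comm d]
  rcases mul_comm_or_eq_mul_mul_of_commutatorSet_subset hG h⁻¹ g with hc | hc
  · rw [hc]
  · rw [hc, mul_assoc, hzx]

theorem isCentrallyEssential_of_commutatorSet_subset [CharP k 2] (hz : z * z = 1)
    (hG : commutatorSet G ⊆ {1, z}) : IsCentrallyEssential k[G] :=
  .of_mul_mem_center _ (one_add_of_mul_mem_center hz hG)
    fun _ => mem_center_of_one_add_of_mul_eq_zero hz hG

end CommutatorSetSubset

end MonoidAlgebra

theorem QuaternionGroup.commutatorSet_subset :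
    commutatorSet (QuaternionGroup 2) ⊆ {1, QuaternionGroup.a 2} := by
  rintro _ ⟨g, h, rfl⟩
  revert g h
  decide

theorem quaternion_group_algebra_centrally_essential :
    IsCentrallyEssential (MonoidAlgebra (ZMod 2) (QuaternionGroup 2)) ∧
    (∃ x y : MonoidAlgebra (ZMod 2) (QuaternionGroup 2), x * y ≠ y * x) ∧
    Nat.card (MonoidAlgebra (ZMod 2) (QuaternionGroup 2)) = 256 := by
  refine ⟨?_, ?_, ?_⟩
  · exact MonoidAlgebra.isCentrallyEssential_of_commutatorSet_subset (by decide)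
      QuaternionGroup.commutatorSet_subset
  · exact MonoidAlgebra.exists_mul_ne_mul
      (g := QuaternionGroup.a 1) (h := QuaternionGroup.xa 0) (by decide)
  · rw [MonoidAlgebra.natCard_eq_pow, Nat.card_eq_fintype_card, Nat.card_eq_fintype_card,
      ZMod.card, QuaternionGroup.card]
    norm_num
end
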